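/- In any pure type system, if Γ ⊢ A : s where s is a top-sort, then either A is a sort or A is a product Πx:B.C. -/

import Mathlib

/-- Terms of a generic λ-calculus with sorts `S` and constants `C` (de Bruijn indices). -/
inductive Tm (S : Type) (C : Type) : Type
  | sort : S → Tm S C
  | const : C → Tm S C
  | var : Nat → Tm S C
  | app : Tm S C → Tm S C → Tm S C
  | lam : Tm S C → Tm S C → Tm S C
  | pi : Tm S C → Tm S C → Tm S C

namespace Tm
variable {S C : Type}

/-- Lifting of de Bruijn indices ≥ k by d. -/
def lift (d k : Nat) : Tm S C → Tm S C
  | sort s => sort s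
  | const c => const c
  | var i => if i < k then var i else var (i + d)
  | app m n => app (m.lift d k) (n.lift d k)
  | lam a m => lam (a.lift d k) (m.lift d (k+1))
  | pi a b => pi (a.lift d k) (b.lift d (k+1))

/-- Substitution of variable k by N. -/
def subst (k : Nat) (N : Tm S C) : Tm S C → Tm S C
  | sort s => sort s
  | const c => const c
  | var i => if i < k then var i else if i = k then N.lift k 0 else var (i-1)
  | app m n => app (subst k N m) (subst k N n)
  | lam a m => lam (subst k N a) (subst (k+1) N m)
  | pi a b => pi (subst k N a) (subst (k+1) N b)

/-- Lifting a simultaneous substitution under a binder. -/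
def upσ (σ : Nat → Tm S C) : Nat → Tm S C
  | 0 => var 0
  | i+1 => (σ i).lift 1 0

/-- Simultaneous substitution. -/
def msubst (σ : Nat → Tm S C) : Tm S C → Tm S C
  | sort s => sort s
  | const c => const c
  | var i => σ i
  | app m n => app (m.msubst σ) (n.msubst σ)
  | lam a m => lam (a.msubst σ) (m.msubst (upσ σ))
  | pi a b => pi (a.msubst σ) (b.msubst (upσ σ))

end Tm

/-- A rewrite rule [Δ] l ↝ r. -/
abbrev Rule (S C : Type) := List (Tm S C) × Tm S C × Tm S C

/-- One-step βR-reduction (contextual closure of β together with rules of R). -/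
inductive Step {S C : Type} (R : Rule S C → Prop) : Tm S C → Tm S C → Prop
  | beta {A M N} : Step R (.app (.lam A M) N) (Tm.subst 0 N M)
  | rew {Δ l r} (σ : Nat → Tm S C) : R (Δ, l, r) → Step R (l.msubst σ) (r.msubst σ)
  | appL {M M' N} : Step R M M' → Step R (.app M N) (.app M' N)
  | appR {M N N'} : Step R N N' → Step R (.app M N) (.app M N')
  | lamA {A A' M} : Step R A A' → Step R (.lam A M) (.lam A' M)
  | lamM {A M M'} : Step R M M' → Step R (.lam A M) (.lam A M')
  | piA {A A' B} : Step R A A' → Step R (.pi A B) (.pi A' B)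
  | piB {A B B'} : Step R B B' → Step R (.pi A B) (.pi A B')

/-- The empty rewrite system: pure β-reduction. -/
def NoRules {S C : Type} : Rule S C → Prop := fun _ => False

/-- Multistep reduction. -/
abbrev Red {S C : Type} (R : Rule S C → Prop) : Tm S C → Tm S C → Prop :=
  Relation.ReflTransGen (Step R)

/-- Conversion: smallest congruence containing the reduction. -/
abbrev Conv {S C : Type} (R : Rule S C → Prop) : Tm S C → Tm S C → Prop :=
  Relation.EqvGen (Step R)

/-- Pure β-reduction and conversion. -/
abbrev BetaRed {S C : Type} : Tm S C → Tm S C → Prop := Red NoRules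
abbrev BetaConv {S C : Type} : Tm S C → Tm S C → Prop := Conv NoRules

/-- Confluence of a relation. -/
def Confluent {X : Type} (r : X → X → Prop) : Prop :=
  ∀ a b c, Relation.ReflTransGen r a b → Relation.ReflTransGen r a c →
    ∃ d, Relation.ReflTransGen r b d ∧ Relation.ReflTransGen r c d

/-- A PTS specification: a set of sorts, axioms and rules. -/
structure Spec (S : Type) where
  sorts : Set S
  ax : S → S → Prop
  ru : S → S → S → Prop

/-- Functional specifications. -/
def Spec.Functional {S : Type} (sp : Spec S) : Prop :=
  (∀ s₁ s₂ s₂', sp.ax s₁ s₂ → sp.ax s₁ s₂' → s₂ = s₂') ∧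
  (∀ s₁ s₂ s₃ s₃', sp.ru s₁ s₂ s₃ → sp.ru s₁ s₂ s₃' → s₃ = s₃')

/-- Top-sorts: sorts with no axiom. -/
def Spec.TopSort {S : Type} (sp : Spec S) (s : S) : Prop :=
  s ∈ sp.sorts ∧ ¬ ∃ s', sp.ax s s'

mutual
/-- Well-formed contexts (generic typing, parametrized by a spec, a constant
signature with a validity predicate, and a rewrite system used in conversion). -/
inductive Wf {S C : Type} (sp : Spec S) (sig : C → Tm S C) (valid : C → Prop)
    (R : Rule S C → Prop) : List (Tm S C) → Prop
  | nil : Wf sp sig valid R []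
  | cons {Γ A s} : Typing sp sig valid R Γ A (.sort s) → Wf sp sig valid R (A :: Γ)

/-- Typing judgment Γ ⊢ M : A (conversion modulo βR). -/
inductive Typing {S C : Type} (sp : Spec S) (sig : C → Tm S C) (valid : C → Prop)
    (R : Rule S C → Prop) : List (Tm S C) → Tm S C → Tm S C → Prop
  | var {Γ i A} : Wf sp sig valid R Γ → Γ[i]? = some A →
      Typing sp sig valid R Γ (.var i) (A.lift (i+1) 0)
  | const {Γ c} : Wf sp sig valid R Γ → valid c →
      Typing sp sig valid R Γ (.const c) (sig c)
  | sort {Γ s₁ s₂} : Wf sp sig valid R Γ → sp.ax s₁ s₂ →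
      Typing sp sig valid R Γ (.sort s₁) (.sort s₂)
  | pi {Γ A B s₁ s₂ s₃} : Typing sp sig valid R Γ A (.sort s₁) →
      Typing sp sig valid R (A :: Γ) B (.sort s₂) → sp.ru s₁ s₂ s₃ →
      Typing sp sig valid R Γ (.pi A B) (.sort s₃)
  | lam {Γ A M B s} : Typing sp sig valid R (A :: Γ) M B →
      Typing sp sig valid R Γ (.pi A B) (.sort s) →
      Typing sp sig valid R Γ (.lam A M) (.pi A B)
  | app {Γ M N A B} : Typing sp sig valid R Γ M (.pi A B) →
      Typing sp sig valid R Γ N A →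
      Typing sp sig valid R Γ (.app M N) (Tm.subst 0 N B)
  | conv {Γ M A B s} : Typing sp sig valid R Γ M A →
      Typing sp sig valid R Γ B (.sort s) → Conv R A B →
      Typing sp sig valid R Γ M B
end

/-- Typing in a pure type system λS (no constants, no rewriting). -/
abbrev PTyping {S : Type} (sp : Spec S) :
    List (Tm S Empty) → Tm S Empty → Tm S Empty → Prop :=
  Typing sp (fun c => c.elim) (fun _ => False) NoRules

abbrev PWf {S : Type} (sp : Spec S) : List (Tm S Empty) → Prop :=
  Wf sp (fun c => c.elim) (fun _ => False) NoRules

/-- The two sorts of the λΠ-calculus. -/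
inductive LSort : Type
  | ty : LSort
  | kd : LSort

/-- The specification of the λΠ-calculus: Type : Kind, rules (Type,Type,Type),(Type,Kind,Kind). -/
def lpiSpec : Spec LSort where
  sorts := Set.univ
  ax s₁ s₂ := s₁ = .ty ∧ s₂ = .kd
  ru s₁ s₂ s₃ := s₁ = .ty ∧ ((s₂ = .ty ∧ s₃ = .ty) ∨ (s₂ = .kd ∧ s₃ = .kd))

/-- A rewrite rule is well-typed in the signature when both sides have a common type
in the plain λΠ-calculus (no rewriting) over that signature. -/
def RuleWellTyped {C : Type} (sig : C → Tm LSort C) (valid : C → Prop)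
    (ρ : Rule LSort C) : Prop :=
  ∃ A, Typing lpiSpec sig valid NoRules ρ.1 ρ.2.1 A ∧
       Typing lpiSpec sig valid NoRules ρ.1 ρ.2.2 A

/-- Well-formed signature: every constant's type is a λΠ type in the empty context. -/
def SigWellFormed {C : Type} (sig : C → Tm LSort C) (valid : C → Prop) : Prop :=
  ∀ c, valid c → ∃ s, Typing lpiSpec sig valid NoRules [] (sig c) (.sort s)

/-- Constants of the Cousineau–Dowek signature Σ_S. -/
inductive Const (S : Type) : Type
  | u : S → Const S
  | eps : S → Const S
  | dot : S → S → Const S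
  | pidot : S → S → S → Const S

/-- Types of the constants of Σ_S. -/
def sigS {S : Type} : Const S → Tm LSort (Const S)
  | .u _ => .sort .ty
  | .eps s => .pi (.const (.u s)) (.sort .ty)
  | .dot _ s₂ => .const (.u s₂)
  | .pidot s₁ s₂ s₃ =>
      .pi (.const (.u s₁))
        (.pi (.pi (.app (.const (.eps s₁)) (.var 0)) (.const (.u s₂))) (.const (.u s₃)))

/-- Valid constants of Σ_S (u_s, ε_s for sorts; ṡ₁ : u_{s₂} for axioms; π̇ for rules). -/
def validS {S : Type} (sp : Spec S) : Const S → Prop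
  | .u s => s ∈ sp.sorts
  | .eps s => s ∈ sp.sorts
  | .dot s₁ s₂ => sp.ax s₁ s₂
  | .pidot s₁ s₂ s₃ => sp.ru s₁ s₂ s₃

/-- The rewrite system R_S: ε_{s₂} ṡ₁ ↝ u_{s₁} and
ε_{s₃}(π̇_{s₁s₂s₃} A B) ↝ Πx:(ε_{s₁}A). ε_{s₂}(B x). -/
inductive RS {S : Type} (sp : Spec S) : Rule LSort (Const S) → Prop
  | axRule {s₁ s₂} : sp.ax s₁ s₂ →
      RS sp ([], .app (.const (.eps s₂)) (.const (.dot s₁ s₂)), .const (.u s₁))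
  | piRule {s₁ s₂ s₃} : sp.ru s₁ s₂ s₃ →
      RS sp ([.pi (.app (.const (.eps s₁)) (.var 0)) (.const (.u s₂)), .const (.u s₁)],
             .app (.const (.eps s₃)) (.app (.app (.const (.pidot s₁ s₂ s₃)) (.var 1)) (.var 0)),
             .pi (.app (.const (.eps s₁)) (.var 1)) (.app (.const (.eps s₂)) (.app (.var 1) (.var 0))))

/-- Typing in λΠ/S. -/
abbrev LTyping {S : Type} (sp : Spec S) :
    List (Tm LSort (Const S)) → Tm LSort (Const S) → Tm LSort (Const S) → Prop :=
  Typing lpiSpec sigS (validS sp) (RS sp)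

abbrev LWf {S : Type} (sp : Spec S) : List (Tm LSort (Const S)) → Prop :=
  Wf lpiSpec sigS (validS sp) (RS sp)

mutual
/-- Forward translation of terms: |M|_Γ = M'. -/
inductive TrT {S : Type} (sp : Spec S) :
    List (Tm S Empty) → Tm S Empty → Tm LSort (Const S) → Prop
  | sort {Γ s s'} : sp.ax s s' → TrT sp Γ (.sort s) (.const (.dot s s'))
  | var {Γ i} : TrT sp Γ (.var i) (.var i)
  | app {Γ M M' N N'} : TrT sp Γ M M' → TrT sp Γ N N' →
      TrT sp Γ (.app M N) (.app M' N')
  | lam {Γ A A' M M'} : TrTy sp Γ A A' → TrT sp (A :: Γ) M M' →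
      TrT sp Γ (.lam A M) (.lam A' M')
  | pi {Γ A B s₁ s₂ s₃ A' A'' B'} : PTyping sp Γ A (.sort s₁) →
      PTyping sp (A :: Γ) B (.sort s₂) → sp.ru s₁ s₂ s₃ →
      TrT sp Γ A A' → TrTy sp Γ A A'' → TrT sp (A :: Γ) B B' →
      TrT sp Γ (.pi A B) (.app (.app (.const (.pidot s₁ s₂ s₃)) A') (.lam A'' B'))

/-- Forward translation of types: ‖A‖_Γ = A'. -/
inductive TrTy {S : Type} (sp : Spec S) :
    List (Tm S Empty) → Tm S Empty → Tm LSort (Const S) → Prop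
  | sort {Γ s} : TrTy sp Γ (.sort s) (.const (.u s))
  | pi {Γ A A' B B'} : TrTy sp Γ A A' → TrTy sp (A :: Γ) B B' →
      TrTy sp Γ (.pi A B) (.pi A' B')
  | el {Γ A s A'} : PTyping sp Γ A (.sort s) → TrT sp Γ A A' →
      TrTy sp Γ A (.app (.const (.eps s)) A')
end

/-- Forward translation of contexts ‖Γ‖. -/
inductive TrCtx {S : Type} (sp : Spec S) :
    List (Tm S Empty) → List (Tm LSort (Const S)) → Prop
  | nil : TrCtx sp [] []
  | cons {Γ Γ' A A'} : TrCtx sp Γ Γ' → TrTy sp Γ A A' → TrCtx sp (A :: Γ) (A' :: Γ')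

mutual
/-- Inverse translation of terms: φ(M) = M'. -/
inductive InvT {S : Type} : Tm LSort (Const S) → Tm S Empty → Prop
  | dot {s₁ s₂} : InvT (.const (.dot s₁ s₂)) (.sort s₁)
  | pidot {s₁ s₂ s₃} : InvT (.const (.pidot s₁ s₂ s₃))
      (.lam (.sort s₁) (.lam (.pi (.var 0) (.sort s₂))
        (.pi (.var 1) (.app (.var 1) (.var 0)))))
  | var {i} : InvT (.var i) (.var i)
  | app {M M' N N'} : InvT M M' → InvT N N' → InvT (.app M N) (.app M' N')
  | lam {A A' M M'} : InvTy A A' → InvT M M' → InvT (.lam A M) (.lam A' M')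

/-- Inverse translation of types: ψ(A) = A'. -/
inductive InvTy {S : Type} : Tm LSort (Const S) → Tm S Empty → Prop
  | u {s} : InvTy (.const (.u s)) (.sort s)
  | el {s M M'} : InvT M M' → InvTy (.app (.const (.eps s)) M) M'
  | pi {A A' B B'} : InvTy A A' → InvTy B B' → InvTy (.pi A B) (.pi A' B')
end

/-- Inverse translation of (object) contexts ψ(Γ). -/
inductive InvCtx {S : Type} : List (Tm LSort (Const S)) → List (Tm S Empty) → Prop
  | nil : InvCtx [] []
  | cons {Γ Γ' A A'} : InvCtx Γ Γ' → InvTy A A' → InvCtx (A :: Γ) (A' :: Γ')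

/-- The minimal completion S* of S: a fresh top-sort τ, axioms s:τ for the top-sorts
of S, and rules (s₁,s₂,τ) for all pairs having no rule. -/
def mc {S : Type} (sp : Spec S) (τ : S) : Spec S where
  sorts := insert τ sp.sorts
  ax s₁ s₂ := sp.ax s₁ s₂ ∨ (s₁ ∈ sp.sorts ∧ (¬ ∃ s, sp.ax s₁ s) ∧ s₂ = τ)
  ru s₁ s₂ s₃ := sp.ru s₁ s₂ s₃ ∨
      (s₁ ∈ insert τ sp.sorts ∧ s₂ ∈ insert τ sp.sorts ∧ (¬ ∃ s, sp.ru s₁ s₂ s) ∧ s₃ = τ)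

/-- S' is a completion of S. -/
def IsCompletion {S : Type} (sp sp' : Spec S) : Prop :=
  sp.sorts ⊆ sp'.sorts ∧
  (∀ s₁ s₂, sp.ax s₁ s₂ → sp'.ax s₁ s₂) ∧
  (∀ s₁ s₂ s₃, sp.ru s₁ s₂ s₃ → sp'.ru s₁ s₂ s₃) ∧
  (∀ s₁ ∈ sp.sorts, ∃ s₂, sp'.ax s₁ s₂) ∧
  (∀ s₁ ∈ sp'.sorts, ∀ s₂ ∈ sp'.sorts, ∃ s₃, sp'.ru s₁ s₂ s₃)

/-- Kind-level β-reduction in a λΠ-calculus modulo: contraction of a β-redex whose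
type has type Kind, under any context. -/
inductive KindStep {C : Type} (sig : C → Tm LSort C) (valid : C → Prop)
    (R : Rule LSort C → Prop) : List (Tm LSort C) → Tm LSort C → Tm LSort C → Prop
  | beta {Γ A M N T} :
      Typing lpiSpec sig valid R Γ (.app (.lam A M) N) T →
      Typing lpiSpec sig valid R Γ T (.sort .kd) →
      KindStep sig valid R Γ (.app (.lam A M) N) (Tm.subst 0 N M)
  | appL {Γ M M' N} : KindStep sig valid R Γ M M' →
      KindStep sig valid R Γ (.app M N) (.app M' N)
  | appR {Γ M N N'} : KindStep sig valid R Γ N N' →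
      KindStep sig valid R Γ (.app M N) (.app M N')
  | lamA {Γ A A' M} : KindStep sig valid R Γ A A' →
      KindStep sig valid R Γ (.lam A M) (.lam A' M)
  | lamM {Γ A M M'} : KindStep sig valid R (A :: Γ) M M' →
      KindStep sig valid R Γ (.lam A M) (.lam A M')
  | piA {Γ A A' B} : KindStep sig valid R Γ A A' →
      KindStep sig valid R Γ (.pi A B) (.pi A' B)
  | piB {Γ A B B'} : KindStep sig valid R (A :: Γ) B B' →
      KindStep sig valid R Γ (.pi A B) (.pi A B')

/-- A term with no Kind-level β-redexes (a λΠ⁻ term). -/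
def KindFree {C : Type} (sig : C → Tm LSort C) (valid : C → Prop)
    (R : Rule LSort C → Prop) (Γ : List (Tm LSort C)) (M : Tm LSort C) : Prop :=
  ∀ N, ¬ KindStep sig valid R Γ M N

/-- Object contexts of λΠ/S: every declared type has type Type. -/
def ObjCtx {S : Type} (sp : Spec S) (Γ : List (Tm LSort (Const S))) : Prop :=
  ∀ i A, Γ[i]? = some A → LTyping sp (Γ.drop (i+1)) A (.sort .ty)

/-- The τ-height measure ℋ_τ on Γ-types of λS*. -/
inductive Ht {S : Type} (sp : Spec S) (τ : S) :
    List (Tm S Empty) → Tm S Empty → Nat → Prop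
  | ntau {Γ A s} : PTyping (mc sp τ) Γ A (.sort s) → s ≠ τ → Ht sp τ Γ A 0
  | srt {Γ s'} : PTyping (mc sp τ) Γ (.sort s') (.sort τ) → Ht sp τ Γ (.sort s') 0
  | pi {Γ B C m n} : PTyping (mc sp τ) Γ (.pi B C) (.sort τ) →
      Ht sp τ Γ B m → Ht sp τ (B :: Γ) C n → Ht sp τ Γ (.pi B C) (max m n + 1)

/-- The reducibility predicate, stratified by the τ-height of the type. -/
def RedN {S : Type} (sp : Spec S) (τ : S) :
    Nat → List (Tm S Empty) → Tm S Empty → Tm S Empty → Prop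
  | n, Γ, M, A =>
    PWf sp Γ ∧ ∃ s, PTyping (mc sp τ) Γ M A ∧ PTyping (mc sp τ) Γ A (.sort s) ∧
      ((s ≠ τ ∨ ∃ s' ∈ sp.sorts, A = .sort s') →
        ∃ M' A', BetaRed M M' ∧ BetaRed A A' ∧ PTyping sp Γ M' A') ∧
      (s = τ → ∀ B C, A = .pi B C → ∀ N,
        (∀ m (hm : m < n), Ht sp τ Γ B m → RedN sp τ m Γ N B) →
        ∀ m (hm : m < n), Ht sp τ Γ (Tm.subst 0 N C) m →
          RedN sp τ m Γ (.app M N) (Tm.subst 0 N C))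
  termination_by n => n

/-- The reducibility predicate Γ ⊨_S M : A. -/
def Reducible {S : Type} (sp : Spec S) (τ : S)
    (Γ : List (Tm S Empty)) (M A : Tm S Empty) : Prop :=
  ∃ n, Ht sp τ Γ A n ∧ RedN sp τ n Γ M A


/-! A term of type `Π x₁ … xₙ, s` with `s` a top-sort cannot itself be typed: inverting the
product rule down to `s` would produce an axiom `s : s'`. So the last rule of a derivation of
`Γ ⊢ A : s` is not a variable, abstraction or conversion rule (each of which types the type
`Π x₁ … xₙ, s`), nor an application `M N : B[N]`, since then `N` or `B` ends in `s`, and in the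
latter case so does the type `Π x, B` of `M`. Only the sort and product rules remain. -/

inductive EndsInSort {S C : Type} (s : S) : Tm S C → Prop
  | sort : EndsInSort s (.sort s)
  | pi {A B} : EndsInSort s B → EndsInSort s (.pi A B)

section EndsInSort
variable {S C : Type} {s : S}

theorem EndsInSort.of_lift {t : Tm S C} {d k : Nat} (h : EndsInSort s (t.lift d k)) :
    EndsInSort s t := by
  induction t generalizing k with
  | sort => cases h; exact .sort
  | var i => simp only [Tm.lift] at h; split at h <;> cases h
  | pi a b _ ihb => cases h with | pi hb => exact .pi (ihb hb)
  | _ => cases h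

theorem EndsInSort.of_subst {t N : Tm S C} {k : Nat} (h : EndsInSort s (Tm.subst k N t)) :
    EndsInSort s t ∨ EndsInSort s N := by
  induction t generalizing k with
  | sort => cases h; exact .inl .sort
  | var i =>
    simp only [Tm.subst] at h
    split_ifs at h
    · cases h
    · exact .inr h.of_lift
    · cases h
  | pi a b _ ihb =>
    cases h with
    | pi hb => exact (ihb hb).imp_left .pi
  | _ => cases h

end EndsInSort

section Typing
variable {S C : Type} {sp : Spec S} {sig : C → Tm S C} {valid : C → Prop} {R : Rule S C → Prop}

theorem Typing.wf {Γ M T} : Typing sp sig valid R Γ M T → Wf sp sig valid R Γ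
  | .var hw _ | .const hw _ | .sort hw _ => hw
  | .pi hA _ _ => hA.wf
  | .lam _ hpi => hpi.wf
  | .app hM _ => hM.wf
  | .conv hM _ _ => hM.wf

theorem Typing.exists_ax_of_sort {Γ M T s₁} :
    Typing sp sig valid R Γ M T → M = .sort s₁ → ∃ s₂, sp.ax s₁ s₂
  | .sort _ hax, rfl => ⟨_, hax⟩
  | .conv h _ _, hM => h.exists_ax_of_sort hM
  | .var .., hM | .const .., hM | .pi .., hM | .lam .., hM | .app .., hM => nomatch hM

theorem Typing.exists_sort_of_pi {Γ M T A B} :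
    Typing sp sig valid R Γ M T → M = .pi A B → ∃ s, Typing sp sig valid R (A :: Γ) B (.sort s)
  | .pi _ hB _, rfl => ⟨_, hB⟩
  | .conv h _ _, hM => h.exists_sort_of_pi hM
  | .var .., hM | .const .., hM | .sort .., hM | .lam .., hM | .app .., hM => nomatch hM

theorem Wf.exists_typing_of_getElem? {Γ : List (Tm S C)} (hΓ : Wf sp sig valid R Γ) {i A}
    (hi : Γ[i]? = some A) : ∃ s, Typing sp sig valid R (Γ.drop (i + 1)) A (.sort s) := by
  induction Γ generalizing i with
  | nil => simp at hi
  | cons B Γ ih =>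
    obtain _ | ⟨hB⟩ := hΓ
    cases i with
    | zero => cases hi; exact ⟨_, hB⟩
    | succ i => exact ih hB.wf hi

theorem not_typing_of_endsInSort {s : S} (hs : ¬ ∃ s', sp.ax s s') {Γ M T}
    (hM : EndsInSort s M) : ¬ Typing sp sig valid R Γ M T := by
  induction hM generalizing Γ T with
  | sort => exact fun h => hs (h.exists_ax_of_sort rfl)
  | pi _ ih =>
    intro h
    obtain ⟨_, hB⟩ := h.exists_sort_of_pi rfl
    exact ih hB

theorem Typing.endsInSort_inv {s : S} (hs : ¬ ∃ s', sp.ax s s')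
    (hsig : ∀ c, valid c → ¬ EndsInSort s (sig c)) {Γ M T} :
    Typing sp sig valid R Γ M T → EndsInSort s T →
      T = .sort s ∧ ((∃ s', M = .sort s') ∨ ∃ A B, M = .pi A B)
  | .var hw hi, hT =>
    let ⟨_, hA⟩ := hw.exists_typing_of_getElem? hi
    absurd hA (not_typing_of_endsInSort hs hT.of_lift)
  | .const _ hc, hT => absurd hT (hsig _ hc)
  | .sort _ _, .sort => ⟨rfl, .inl ⟨_, rfl⟩⟩
  | .pi _ _ _, .sort => ⟨rfl, .inr ⟨_, _, rfl⟩⟩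
  | .lam _ hpi, hT => absurd hpi (not_typing_of_endsInSort hs hT)
  | .app hM hN, hT =>
    match hT.of_subst with
    | .inl hB => nomatch (hM.endsInSort_inv hs hsig (.pi hB)).1
    | .inr hN' => absurd hN (not_typing_of_endsInSort hs hN')
  | .conv _ hB _, hT => absurd hB (not_typing_of_endsInSort hs hT)

end Typing

/-- top-sort types are sorts or products. -/
theorem top_sort_types {S : Type} (sp : Spec S) {Γ : List (Tm S Empty)}
    {A : Tm S Empty} {s : S} (hs : sp.TopSort s)
    (h : PTyping sp Γ A (.sort s)) :
    (∃ s', A = Tm.sort s') ∨ ∃ B C, A = Tm.pi B C :=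
  (h.endsInSort_inv hs.2 (fun c => c.elim) .sort).2
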